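/- arXiv:1503.08001 — 3 statements merged into one kernel-verified Lean document; each statement's English description precedes it below -/
import Mathlib

section
/- Let F be a field and x0, x1, x2 be elements of the algebraic closure of F, all nonzero and not equal to 1. Define S(X0,X1,X2) = (X0²X1² + X0²X2² + X1²X2²) - 2(X0²X1X2 + X0X1²X2 + X0X1X2²) - X0X1X2 (this is the third summation polynomial for Weierstrass coefficients (1,0,0,0,0), where b2=1 and b4=b6=b8=0). Then S(x0/(x0-1)², x1/(x1-1)², x2/(x2-1)²) = ((x0-1)(x1-1)(x2-1))⁻⁴ · (x1x2 - x0)(x0x2 - x1)(x2 - x0x1)(x0x1x2 - 1). -/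
set_option maxHeartbeats 1000000 in
/-- Third summation polynomial identity for the nodal curve (Weierstrass coefficients
`(1,0,0,0,0)`, so `b₂ = 1`, `b₄ = b₆ = b₈ = 0`). -/
theorem stmt_0 (F : Type*) [Field F] (x0 x1 x2 : AlgebraicClosure F)
    (h0 : x0 ≠ 0) (h1 : x1 ≠ 0) (h2 : x2 ≠ 0)
    (h0' : x0 ≠ 1) (h1' : x1 ≠ 1) (h2' : x2 ≠ 1) :
    (fun X0 X1 X2 : AlgebraicClosure F =>
        (X0 ^ 2 * X1 ^ 2 + X0 ^ 2 * X2 ^ 2 + X1 ^ 2 * X2 ^ 2)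
          - 2 * (X0 ^ 2 * X1 * X2 + X0 * X1 ^ 2 * X2 + X0 * X1 * X2 ^ 2)
          - X0 * X1 * X2)
      (x0 / (x0 - 1) ^ 2) (x1 / (x1 - 1) ^ 2) (x2 / (x2 - 1) ^ 2) =
      (((x0 - 1) * (x1 - 1) * (x2 - 1))⁻¹) ^ 4 *
        ((x1 * x2 - x0) * (x0 * x2 - x1) * (x2 - x0 * x1) * (x0 * x1 * x2 - 1)) := by
  have d0 : x0 - 1 ≠ 0 := sub_ne_zero.mpr h0'
  have d1 : x1 - 1 ≠ 0 := sub_ne_zero.mpr h1'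
  have d2 : x2 - 1 ≠ 0 := sub_ne_zero.mpr h2'
  have hD : ((x0 - 1) * (x1 - 1) * (x2 - 1)) ≠ 0 :=
    mul_ne_zero (mul_ne_zero d0 d1) d2
  have h4 : ((x0 - 1) * (x1 - 1) * (x2 - 1)) ^ 4 ≠ 0 := pow_ne_zero _ hD
  simp only
  rw [inv_pow, inv_mul_eq_div, eq_div_iff h4]
  set y0 := x0 / (x0 - 1) ^ 2 with hy0
  set y1 := x1 / (x1 - 1) ^ 2 with hy1
  set y2 := x2 / (x2 - 1) ^ 2 with hy2
  have e0 : y0 * (x0 - 1) ^ 2 = x0 := div_mul_cancel₀ _ (pow_ne_zero 2 d0)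
  have e1 : y1 * (x1 - 1) ^ 2 = x1 := div_mul_cancel₀ _ (pow_ne_zero 2 d1)
  have e2 : y2 * (x2 - 1) ^ 2 = x2 := div_mul_cancel₀ _ (pow_ne_zero 2 d2)
  have f0 : y0 ^ 2 * (x0 - 1) ^ 4 = x0 ^ 2 := by
    rw [show (x0 - 1) ^ 4 = ((x0 - 1) ^ 2) ^ 2 by ring, ← mul_pow, e0]
  have f1 : y1 ^ 2 * (x1 - 1) ^ 4 = x1 ^ 2 := by
    rw [show (x1 - 1) ^ 4 = ((x1 - 1) ^ 2) ^ 2 by ring, ← mul_pow, e1]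
  have f2 : y2 ^ 2 * (x2 - 1) ^ 4 = x2 ^ 2 := by
    rw [show (x2 - 1) ^ 4 = ((x2 - 1) ^ 2) ^ 2 by ring, ← mul_pow, e2]
  linear_combination
    (1) * (y1 ^ 2 * (x1 - 1) ^ 4 * (x2 - 1) ^ 4) * f0 +
    (1) * (x0 ^ 2 * (x2 - 1) ^ 4) * f1 +
    (1) * ((x1 - 1) ^ 4 * y2 ^ 2 * (x2 - 1) ^ 4) * f0 +
    (1) * (x0 ^ 2 * (x1 - 1) ^ 4) * f2 +
    (1) * ((x0 - 1) ^ 4 * y2 ^ 2 * (x2 - 1) ^ 4) * f1 +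
    (1) * ((x0 - 1) ^ 4 * x1 ^ 2) * f2 +
    (-2) * (y1 ^ 1 * (x1 - 1) ^ 4 * y2 ^ 1 * (x2 - 1) ^ 4) * f0 +
    (-2) * ((x1 - 1) ^ 2 * x0 ^ 2 * y2 ^ 1 * (x2 - 1) ^ 4) * e1 +
    (-2) * ((x2 - 1) ^ 2 * x0 ^ 2 * x1 ^ 1 * (x1 - 1) ^ 2) * e2 +
    (-2) * ((x0 - 1) ^ 2 * y1 ^ 2 * (x1 - 1) ^ 4 * y2 ^ 1 * (x2 - 1) ^ 4) * e0 +
    (-2) * (x0 ^ 1 * (x0 - 1) ^ 2 * y2 ^ 1 * (x2 - 1) ^ 4) * f1 +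
    (-2) * ((x2 - 1) ^ 2 * x0 ^ 1 * (x0 - 1) ^ 2 * x1 ^ 2) * e2 +
    (-2) * ((x0 - 1) ^ 2 * y1 ^ 1 * (x1 - 1) ^ 4 * y2 ^ 2 * (x2 - 1) ^ 4) * e0 +
    (-2) * ((x1 - 1) ^ 2 * x0 ^ 1 * (x0 - 1) ^ 2 * y2 ^ 2 * (x2 - 1) ^ 4) * e1 +
    (-2) * (x0 ^ 1 * (x0 - 1) ^ 2 * x1 ^ 1 * (x1 - 1) ^ 2) * f2 +
    (-1) * ((x0 - 1) ^ 2 * y1 ^ 1 * (x1 - 1) ^ 4 * y2 ^ 1 * (x2 - 1) ^ 4) * e0 +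
    (-1) * ((x1 - 1) ^ 2 * x0 ^ 1 * (x0 - 1) ^ 2 * y2 ^ 1 * (x2 - 1) ^ 4) * e1 +
    (-1) * ((x2 - 1) ^ 2 * x0 ^ 1 * (x0 - 1) ^ 2 * x1 ^ 1 * (x1 - 1) ^ 2) * e2
end

section
/- Let F = F_{2^n} and let E/F be an elliptic curve given by Y² + a1·XY + a3·Y = X³ + a2·X² + a4·X + a6 with a1 ≠ 0. The map E(F) → F_2 sending the identity to 0 and a point P ≠ 0 to Tr_{F/F_2}((x(P) + a2)/a1²) is a group homomorphism. -/
open WeierstrassCurve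

/-- The map `E(F) → F₂` sending `0 ↦ 0` and an affine point `P ↦ Tr_{F/F₂}((x(P) + a₂)/a₁²)`. -/
noncomputable def ecTraceMap {n : ℕ} (E : WeierstrassCurve.Affine (GaloisField 2 n)) :
    E.Point → ZMod 2
  | .zero => 0
  | .some (x := x) _ _ => Algebra.trace (ZMod 2) (GaloisField 2 n) ((x + E.a₂) / E.a₁ ^ 2)

/-!
If `P₁ + P₂ + P₃ = 0` and the line through them has slope `ℓ`, then in characteristic 2
`x₃ + a₂ = ℓ² + a₁ℓ + (x₁ + a₂) + (x₂ + a₂)`. Since `P₁ + P₂ = -P₃` has the same `x` as `P₃`,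
dividing by `a₁²` shows that the normalized coordinate of `P₁ + P₂` differs from the sum of
those of `P₁` and `P₂` by `u² + u` with `u = ℓ / a₁`, whose trace vanishes since `Tr(u²) = Tr(u)`
(composing with the Frobenius permutes the Galois group). Opposite points share their `x`,
so their values cancel in `F₂`.
-/

theorem FiniteField.trace_pow_card_eq_trace {K L : Type*} [Field K] [Fintype K] [Field L]
    [Finite L] [Algebra K L] (x : L) :
    Algebra.trace K L (x ^ Fintype.card K) = Algebra.trace K L x := by
  apply (algebraMap K L).injective
  rw [trace_eq_sum_automorphisms, trace_eq_sum_automorphisms]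
  exact Fintype.sum_equiv (Equiv.mulRight (frobeniusAlgEquivOfAlgebraic K L)) _ _ fun _ => rfl

theorem trace_sq_add_self_eq_zero {L : Type*} [Field L] [Finite L] [Algebra (ZMod 2) L]
    (u : L) : Algebra.trace (ZMod 2) L (u ^ 2 + u) = 0 := by
  have h := FiniteField.trace_pow_card_eq_trace (K := ZMod 2) u
  rw [ZMod.card] at h
  rw [map_add, h]
  exact CharTwo.add_self_eq_zero _

theorem WeierstrassCurve.Affine.addX_add_a₂_of_charTwo {R : Type*} [CommRing R] [CharP R 2]
    (W : WeierstrassCurve.Affine R) (x₁ x₂ ℓ : R) :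
    W.addX x₁ x₂ ℓ + W.a₂ = ℓ ^ 2 + W.a₁ * ℓ + (x₁ + W.a₂) + (x₂ + W.a₂) := by
  rw [Affine.addX]
  linear_combination (-x₁ - x₂ - W.a₂) * CharTwo.two_eq_zero (R := R)

theorem ecTraceMap_zero {n : ℕ} (E : WeierstrassCurve.Affine (GaloisField 2 n)) :
    ecTraceMap E 0 = 0 := rfl

theorem ecTraceMap_some {n : ℕ} {E : WeierstrassCurve.Affine (GaloisField 2 n)}
    {x y : GaloisField 2 n} (h : E.Nonsingular x y) :
    ecTraceMap E (.some x y h) = Algebra.trace (ZMod 2) _ ((x + E.a₂) / E.a₁ ^ 2) := rfl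

open Classical in
theorem stmt_8_general (n : ℕ) (E : WeierstrassCurve.Affine (GaloisField 2 n))
    (ha1 : E.a₁ ≠ 0) :
    ∀ P Q : E.Point, ecTraceMap E (P + Q) = ecTraceMap E P + ecTraceMap E Q := by
  rintro (_ | ⟨x₁, y₁, h₁⟩) (_ | ⟨x₂, y₂, h₂⟩)
  any_goals simp only [← Affine.Point.zero_def, zero_add, add_zero, ecTraceMap_zero]
  simp only [ecTraceMap_some]
  by_cases hxy : x₁ = x₂ ∧ y₁ = E.negY x₂ y₂
  · rw [Affine.Point.add_of_Y_eq hxy.1 hxy.2, ecTraceMap_zero, hxy.1, CharTwo.add_self_eq_zero]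
  have hsplit : ∀ ℓ A B : GaloisField 2 n, (ℓ ^ 2 + E.a₁ * ℓ + A + B) / E.a₁ ^ 2 =
      ((ℓ / E.a₁) ^ 2 + ℓ / E.a₁) + (A / E.a₁ ^ 2 + B / E.a₁ ^ 2) := by
    intro ℓ A B
    field_simp
    ring
  rw [Affine.Point.add_some hxy, ecTraceMap_some, Affine.addX_add_a₂_of_charTwo, hsplit,
    map_add, trace_sq_add_self_eq_zero, zero_add, map_add]

open Classical in
/-- For an ordinary elliptic curve `E` over `F = F_{2ⁿ}` (i.e. `a₁ ≠ 0`), the map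
`E(F) → F₂`, `0 ↦ 0`, `P ↦ Tr_{F/F₂}((x(P) + a₂)/a₁²)`, is a group homomorphism. -/
theorem stmt_8 (n : ℕ) (hn : n ≠ 0) (E : WeierstrassCurve.Affine (GaloisField 2 n))
    (hΔ : E.Δ ≠ 0) (ha1 : E.a₁ ≠ 0) :
    ∀ P Q : E.Point, ecTraceMap E (P + Q) = ecTraceMap E P + ecTraceMap E Q :=
  stmt_8_general n E ha1
end

section
/- Let F = F_{2^n} and let E/F be an ordinary elliptic curve Y² + a1XY + a3Y = X³ + a2X² + a4X + a6 (a1 ≠ 0). Let P = (x, y) ∈ E(F) be a point that is not 2-torsion (so a1·x + a3 ≠ 0), and set b = a1(a1x + a3) ≠ 0. Then in F[X1, X2], with b6 = a3², b8 = a1²a6 + a1a3a4 + a2a3² + a4² (characteristic 2 reductions), the third summation polynomial T = S(X1, X2, x) satisfies: T/b² = ((1/b)X1X2)² + (1/b)X1X2 + ((x/b)(X1+X2))² + (a3/(b·a1))(X1+X2) + (b6·x + b8)/b², and moreover x/b + a3/(b·a1) = 1/a1². -/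
open MvPolynomial

/-
In characteristic 2 the cross term of `(x (X₁ + X₂))²` vanishes, so `S(X₁, X₂, x)` regroups as
`(X₁X₂)² + (b₂x + b₄) X₁X₂ + (x (X₁ + X₂))² + (b₄x + b₆)(X₁ + X₂) + (b₆x + b₈)`.
Both middle coefficients are multiples of `a₁x + a₃`: `b₂x + b₄ = b` and `b₄x + b₆ = (a₃/a₁) b`,
so dividing by `b²` gives the stated normal form.
-/

theorem CharTwo.summation_three_eq_regroup {R : Type*} [CommRing R] [CharP R 2]
    (X1 X2 x b2 b4 b6 b8 : R) :
    X1 ^ 2 * X2 ^ 2 + X1 ^ 2 * x ^ 2 + X2 ^ 2 * x ^ 2 + b2 * (X1 * X2 * x) +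
        b4 * (X1 * X2 + X1 * x + X2 * x) + b6 * (X1 + X2 + x) + b8 =
      (X1 * X2) ^ 2 + (b2 * x + b4) * (X1 * X2) + (x * (X1 + X2)) ^ 2 +
        (b4 * x + b6) * (X1 + X2) + (b6 * x + b8) := by
  linear_combination (-x ^ 2 * X1 * X2) * CharTwo.two_eq_zero (R := R)

section Coefficients

variable {K : Type*} [Field K] {a1 a3 x : K}

theorem one_div_sq_mul_b2_mul_add_b4 (ha1 : a1 ≠ 0) (hP : a1 * x + a3 ≠ 0) :
    1 / (a1 * (a1 * x + a3)) ^ 2 * (a1 ^ 2 * x + a1 * a3) = 1 / (a1 * (a1 * x + a3)) := by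
  field_simp

theorem one_div_sq_mul_b4_mul_add_b6 (ha1 : a1 ≠ 0) (hP : a1 * x + a3 ≠ 0) :
    1 / (a1 * (a1 * x + a3)) ^ 2 * (a1 * a3 * x + a3 ^ 2) =
      a3 / (a1 * (a1 * x + a3) * a1) := by
  field_simp

theorem div_add_div_eq_one_div_sq (ha1 : a1 ≠ 0) (hP : a1 * x + a3 ≠ 0) :
    x / (a1 * (a1 * x + a3)) + a3 / (a1 * (a1 * x + a3) * a1) = 1 / a1 ^ 2 := by
  rw [mul_comm a1 x] at hP ⊢
  field_simp

end Coefficients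

theorem summation_three_div_sq_eq {K σ : Type*} [Field K] [CharP K 2] {a1 a3 x b8 : K}
    (ha1 : a1 ≠ 0) (hP : a1 * x + a3 ≠ 0) (X1 X2 : MvPolynomial σ K) :
    C (1 / (a1 * (a1 * x + a3)) ^ 2) *
        (X1 ^ 2 * X2 ^ 2 + X1 ^ 2 * C (x ^ 2) + X2 ^ 2 * C (x ^ 2) +
          C (a1 ^ 2) * (X1 * X2 * C x) + C (a1 * a3) * (X1 * X2 + X1 * C x + X2 * C x) +
          C (a3 ^ 2) * (X1 + X2 + C x) + C b8) =
      (C (1 / (a1 * (a1 * x + a3))) * X1 * X2) ^ 2 + C (1 / (a1 * (a1 * x + a3))) * X1 * X2 +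
        (C (x / (a1 * (a1 * x + a3))) * (X1 + X2)) ^ 2 +
        C (a3 / (a1 * (a1 * x + a3) * a1)) * (X1 + X2) +
        C ((a3 ^ 2 * x + b8) / (a1 * (a1 * x + a3)) ^ 2) := by
  set b := a1 * (a1 * x + a3) with hb
  have hsq : C (σ := σ) (1 / b ^ 2) = C (1 / b) ^ 2 := by rw [← map_pow, one_div_pow]
  have hxsq : C (σ := σ) (1 / b ^ 2) * C x ^ 2 = C (x / b) ^ 2 := by
    rw [← map_pow, ← map_mul, ← map_pow, div_pow, one_div_mul_eq_div]
  have hb2 : C (σ := σ) (1 / b ^ 2) * (C (a1 ^ 2) * C x + C (a1 * a3)) = C (1 / b) := by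
    rw [← map_mul, ← map_add, ← map_mul, hb, one_div_sq_mul_b2_mul_add_b4 ha1 hP]
  have hb4 : C (σ := σ) (1 / b ^ 2) * (C (a1 * a3) * C x + C (a3 ^ 2)) = C (a3 / (b * a1)) := by
    rw [← map_mul, ← map_add, ← map_mul, hb, one_div_sq_mul_b4_mul_add_b6 ha1 hP]
  have hb8 : C (σ := σ) (1 / b ^ 2) * (C (a3 ^ 2) * C x + C b8) =
      C ((a3 ^ 2 * x + b8) / b ^ 2) := by
    rw [← map_mul, ← map_add, ← map_mul, one_div_mul_eq_div]
  rw [map_pow C x 2]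
  linear_combination C (1 / b ^ 2) * CharTwo.summation_three_eq_regroup X1 X2 (C x)
      (C (a1 ^ 2)) (C (a1 * a3)) (C (a3 ^ 2)) (C b8) +
    (X1 * X2) ^ 2 * hsq + (X1 + X2) ^ 2 * hxsq + X1 * X2 * hb2 + (X1 + X2) * hb4 + hb8

theorem stmt_15_general (n : ℕ) (a1 a2 a3 a4 a6 x : GaloisField 2 n)
    (hΔ : a1 ≠ 0) (h2tor : a1 * x + a3 ≠ 0) :
    let F := GaloisField 2 n
    let b : F := a1 * (a1 * x + a3)
    let b2 : F := a1 ^ 2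
    let b4 : F := a1 * a3
    let b6 : F := a3 ^ 2
    let b8 : F := a1 ^ 2 * a6 + a1 * a3 * a4 + a2 * a3 ^ 2 + a4 ^ 2
    let X1 : MvPolynomial (Fin 2) F := X 0
    let X2 : MvPolynomial (Fin 2) F := X 1
    let T : MvPolynomial (Fin 2) F :=
      X1 ^ 2 * X2 ^ 2 + X1 ^ 2 * C (x ^ 2) + X2 ^ 2 * C (x ^ 2) +
        C b2 * (X1 * X2 * C x) + C b4 * (X1 * X2 + X1 * C x + X2 * C x) +
        C b6 * (X1 + X2 + C x) + C b8
    C (1 / b ^ 2) * T =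
        (C (1 / b) * X1 * X2) ^ 2 + C (1 / b) * X1 * X2 +
          (C (x / b) * (X1 + X2)) ^ 2 + C (a3 / (b * a1)) * (X1 + X2) +
          C ((b6 * x + b8) / b ^ 2) ∧
      x / b + a3 / (b * a1) = 1 / a1 ^ 2 := by
  exact ⟨summation_three_div_sq_eq hΔ h2tor (X 0) (X 1), div_add_div_eq_one_div_sq hΔ h2tor⟩

/-- For an ordinary elliptic curve over `F = F_{2ⁿ}` and `P = (x, y) ∈ E(F)` not `2`-torsion
(`a₁x + a₃ ≠ 0`), with `b = a₁(a₁x + a₃)`, the specialized third summation polynomial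
`T = S(X₁, X₂, x)` satisfies
`T/b² = ((1/b)X₁X₂)² + (1/b)X₁X₂ + ((x/b)(X₁+X₂))² + (a₃/(ba₁))(X₁+X₂) + (b₆x + b₈)/b²`,
and moreover `x/b + a₃/(ba₁) = 1/a₁²`. -/
theorem stmt_15 (n : ℕ) (hn : n ≠ 0) (a1 a2 a3 a4 a6 x y : GaloisField 2 n)
    (hcurve : y ^ 2 + a1 * x * y + a3 * y = x ^ 3 + a2 * x ^ 2 + a4 * x + a6)
    (hΔ : a1 ≠ 0) (h2tor : a1 * x + a3 ≠ 0) :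
    let F := GaloisField 2 n
    let b : F := a1 * (a1 * x + a3)
    let b2 : F := a1 ^ 2
    let b4 : F := a1 * a3
    let b6 : F := a3 ^ 2
    let b8 : F := a1 ^ 2 * a6 + a1 * a3 * a4 + a2 * a3 ^ 2 + a4 ^ 2
    let X1 : MvPolynomial (Fin 2) F := X 0
    let X2 : MvPolynomial (Fin 2) F := X 1
    let T : MvPolynomial (Fin 2) F :=
      X1 ^ 2 * X2 ^ 2 + X1 ^ 2 * C (x ^ 2) + X2 ^ 2 * C (x ^ 2) +
        C b2 * (X1 * X2 * C x) + C b4 * (X1 * X2 + X1 * C x + X2 * C x) +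
        C b6 * (X1 + X2 + C x) + C b8
    C (1 / b ^ 2) * T =
        (C (1 / b) * X1 * X2) ^ 2 + C (1 / b) * X1 * X2 +
          (C (x / b) * (X1 + X2)) ^ 2 + C (a3 / (b * a1)) * (X1 + X2) +
          C ((b6 * x + b8) / b ^ 2) ∧
      x / b + a3 / (b * a1) = 1 / a1 ^ 2 :=
  stmt_15_general n a1 a2 a3 a4 a6 x hΔ h2tor
end
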